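/- (Johnson–Lindenstrauss lemma for finite sets) Let M ⊂ ℝ^d be a set of n points, ε ∈ (0,1/2), and k > 8 log n / ε². If A is a k×d matrix with i.i.d. N(0,1/k) entries, then with positive probability, for all pairs u, v ∈ M simultaneously, (1−ε)‖u−v‖² ≤ ‖Au−Av‖² ≤ (1+ε)‖u−v‖². -/

import Mathlib

/-!
If `B` has i.i.d. `N(0, w)` entries and `x ≠ 0`, then `‖Bx‖² / (w‖x‖²)` is a `χ²` variable
with `k` degrees of freedom, and the Chernoff bound puts probability at most
`exp (-(k / 2) (r - 1 - log r))` beyond `r k w ‖x‖²`. A union bound over the `n (n - 1) / 2`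
unordered pairs of `M` gives positive probability as soon as each two-sided tail is below
`1/n²`.

At the variance `1/k` of the statement the rates at `r = 1 ± ε` are `ε²/2 ∓ ε³/3 + O(ε⁴)`,
too small when `k` is just above `8 log n / ε²`. But nondegenerate Gaussian matrices are
mutually absolutely continuous, so positivity of a probability does not depend on the
variance. At the variance `(1 - ε²/3)/k` the thresholds become `r = (1 ± ε) / (1 - ε²/3)`,
the third-order terms cancel, both rates are at least `ε²/2`, and each tail is at most
`exp (-k ε²/4) < 1/n²`.
-/

open MeasureTheory ProbabilityTheory Real Matrix Finset
open scoped NNReal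

namespace Real

lemma log_one_add_le_cubic {x : ℝ} (hx : 0 ≤ x) :
    log (1 + x) ≤ x - x ^ 2 / 2 + x ^ 3 / 3 := by
  let g : ℝ → ℝ := fun y => y - y ^ 2 / 2 + y ^ 3 / 3 - log (1 + y)
  have hg : ∀ y, 0 ≤ y → HasDerivAt g (y ^ 3 / (1 + y)) y := by
    intro y hy
    have hy' : 1 + y ≠ 0 := by positivity
    refine ((((hasDerivAt_id' y).sub ((hasDerivAt_pow 2 y).div_const 2)).add
      ((hasDerivAt_pow 3 y).div_const 3)).sub
      (((hasDerivAt_id' y).const_add 1).log hy')).congr_deriv ?_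
    field_simp
    ring
  have hmono : MonotoneOn g (Set.Ici 0) := by
    refine monotoneOn_of_hasDerivWithinAt_nonneg (f' := fun y => y ^ 3 / (1 + y))
      (convex_Ici 0) (fun y hy => (hg y hy).continuousAt.continuousWithinAt)
      (fun y hy => ?_) (fun y hy => ?_) <;> rw [interior_Ici] at hy
    · exact (hg y hy.le).hasDerivWithinAt
    · have : (0 : ℝ) < y := hy
      positivity
  have := hmono Set.self_mem_Ici hx hx
  simp only [g, add_zero, log_one] at this
  linarith

lemma quartic_le_neg_log_one_sub {x : ℝ} (hx₀ : 0 ≤ x) (hx₁ : x < 1) :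
    x + x ^ 2 / 2 + x ^ 3 / 3 + x ^ 4 / 4 ≤ -log (1 - x) := by
  have := sum_le_hasSum (range 4) (fun n _ => by positivity)
    (hasSum_pow_div_log_of_abs_lt_one (abs_lt.mpr ⟨by linarith, hx₁⟩))
  norm_num [sum_range_succ] at this
  linarith

end Real

noncomputable def chiSqRate (r : ℝ) : ℝ := r - 1 - log r

lemma sq_div_two_le_chiSqRate_one_add_div {ε : ℝ} (h₀ : 0 ≤ ε) (h₁ : ε < 1 / 2) :
    ε ^ 2 / 2 ≤ chiSqRate ((1 + ε) / (1 - ε ^ 2 / 3)) := by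
  have hc : 0 < 1 - ε ^ 2 / 3 := by nlinarith
  set c := 1 - ε ^ 2 / 3
  have hlog_c := one_sub_inv_le_log_of_pos hc
  have hdiv : ε + ε ^ 3 / 3 ≤ ε / c := by
    have : (ε + ε ^ 3 / 3) * c = ε - ε ^ 5 / 9 := by ring
    rw [le_div_iff₀ hc, this]
    linarith [pow_nonneg h₀ 5]
  have hsplit : (1 + ε) / c = 1 / c + ε / c := by ring
  rw [chiSqRate, log_div (by positivity) hc.ne', hsplit, one_div]
  linarith [log_one_add_le_cubic h₀]

lemma sq_div_two_le_chiSqRate_one_sub_div {ε : ℝ} (h₀ : 0 ≤ ε) (h₁ : ε < 1 / 2) :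
    ε ^ 2 / 2 ≤ chiSqRate ((1 - ε) / (1 - ε ^ 2 / 3)) := by
  have hc : 0 < 1 - ε ^ 2 / 3 := by nlinarith
  set c := 1 - ε ^ 2 / 3
  have hlog_c := one_sub_inv_le_log_of_pos hc
  have hdiv : ε / c ≤ ε + ε ^ 3 / 3 + ε ^ 4 / 4 := by
    have : (ε + ε ^ 3 / 3 + ε ^ 4 / 4) * c = ε + ε ^ 4 * (1 / 4 - ε / 9 - ε ^ 2 / 12) := by
      ring
    rw [div_le_iff₀ hc, this]
    have : 0 ≤ 1 / 4 - ε / 9 - ε ^ 2 / 12 := by nlinarith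
    linarith [mul_nonneg (pow_nonneg h₀ 4) this]
  have hsplit : (1 - ε) / c = 1 / c - ε / c := by ring
  rw [chiSqRate, log_div (by linarith) hc.ne', hsplit, one_div]
  linarith [quartic_le_neg_log_one_sub h₀ (by linarith)]

lemma sum_sq_pos_of_ne_zero {κ : Type*} [Fintype κ] {x : κ → ℝ} (hx : x ≠ 0) :
    0 < ∑ i, x i ^ 2 := by
  obtain ⟨i, hi⟩ := Function.ne_iff.mp hx
  exact sum_pos' (fun j _ => sq_nonneg _) ⟨i, mem_univ _, pow_two_pos_of_ne_zero hi⟩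

lemma offDiag_card_mul_exp_neg_lt_one {α : Type*} [DecidableEq α] (M : Finset α) {a : ℝ}
    (ha : 2 * log #M < a) : #M.offDiag * exp (-a) < 1 := by
  have hcard : (#M.offDiag : ℝ) ≤ #M ^ 2 := by
    rw [offDiag_card, sq]
    exact_mod_cast Nat.sub_le _ _
  rcases (#M).eq_zero_or_pos with h | h
  · simp [h]
  calc _ ≤ (#M : ℝ) ^ 2 * exp (-a) := by gcongr
    _ < (#M : ℝ) ^ 2 * exp (-(2 * log #M)) := by gcongr
    _ = 1 := by
      rw [show 2 * log (#M : ℝ) = log ((#M : ℝ) ^ 2) by rw [log_pow]; norm_num, exp_neg,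
        exp_log (by positivity), mul_inv_cancel₀ (by positivity)]

lemma integral_exp_mul_sq_gaussianReal {v : ℝ≥0} {t : ℝ} (ht : 2 * t * v < 1) :
    ∫ y, exp (t * y ^ 2) ∂gaussianReal 0 v = (√(1 - 2 * t * v))⁻¹ := by
  rcases eq_or_ne v 0 with rfl | hv
  · simp [gaussianReal_zero_var]
  have hv' : (0 : ℝ) < v := by positivity
  have hpdf : ∀ y, gaussianPDFReal 0 v y • exp (t * y ^ 2)
      = (√(2 * π * v))⁻¹ * exp (-((1 - 2 * t * v) / (2 * v)) * y ^ 2) := by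
    intro y
    rw [gaussianPDFReal, smul_eq_mul, mul_assoc, ← exp_add]
    congr 2
    field_simp
    ring
  rw [integral_gaussianReal_eq_integral_smul hv]
  simp_rw [hpdf]
  rw [integral_const_mul, integral_gaussian, ← sqrt_inv, ← sqrt_inv,
    ← sqrt_mul (by positivity)]
  congr 1
  field_simp

lemma ProbabilityTheory.iIndepFun.map_finsetSum_eq_gaussianReal {ι Ω : Type*}
    {mΩ : MeasurableSpace Ω} {P : Measure Ω} {X : ι → Ω → ℝ} (hX : iIndepFun X P)
    (hmeas : ∀ i, Measurable (X i)) {m : ι → ℝ} {v : ι → ℝ≥0}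
    (hlaw : ∀ i, P.map (X i) = gaussianReal (m i) (v i)) (s : Finset ι) :
    P.map (∑ i ∈ s, X i) = gaussianReal (∑ i ∈ s, m i) (∑ i ∈ s, v i) := by
  classical
  have := hX.isProbabilityMeasure
  induction s using Finset.induction_on with
  | empty =>
    rw [sum_empty, sum_empty, sum_empty, gaussianReal_zero_var]
    exact (Measure.map_const P 0).trans (by simp)
  | insert i s hi ih =>
    rw [sum_insert hi, sum_insert hi, sum_insert hi, add_comm (X i), add_comm (m i),
      add_comm (v i)]
    exact gaussianReal_add_gaussianReal_of_indepFun
      (hX.indepFun_finsetSum_of_notMem hmeas hi) ih (hlaw i)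

lemma pi_gaussianReal_map_dotProduct {κ : Type*} [Fintype κ] (w : ℝ≥0) (x : κ → ℝ) :
    (Measure.pi fun _ : κ => gaussianReal 0 w).map (· ⬝ᵥ x)
      = gaussianReal 0 (w * (∑ i, x i ^ 2).toNNReal) := by
  have hindep : iIndepFun (fun i (b : κ → ℝ) => b i * x i)
      (Measure.pi fun _ => gaussianReal 0 w) :=
    iIndepFun_pi (X := fun i t => t * x i) fun i => (measurable_mul_const _).aemeasurable
  have hlaw : ∀ i, (Measure.pi fun _ : κ => gaussianReal 0 w).map (fun b => b i * x i)
      = gaussianReal 0 ((x i ^ 2).toNNReal * w) := by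
    intro i
    rw [show (fun b : κ → ℝ => b i * x i) = (· * x i) ∘ Function.eval i from rfl,
      ← Measure.map_map (measurable_mul_const (x i)) (measurable_pi_apply i),
      (measurePreserving_eval _ i).map_eq, gaussianReal_map_mul_const, mul_zero,
      Real.toNNReal_of_nonneg (sq_nonneg _)]
  have := hindep.map_finsetSum_eq_gaussianReal
    (fun i => (measurable_pi_apply i).mul_const _) hlaw univ
  rw [Real.toNNReal_sum_of_nonneg fun i _ => sq_nonneg (x i), mul_comm, sum_mul]
  simpa [dotProduct, sum_fn] using this

namespace MeasureTheory.Measure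

variable {ι : Type*} [Fintype ι]

lemma AbsolutelyContinuous.pi_fin : ∀ {n : ℕ} {α : Fin n → Type*}
    [∀ i, MeasurableSpace (α i)] {μ ν : ∀ i, Measure (α i)} [∀ i, SigmaFinite (μ i)]
    [∀ i, SigmaFinite (ν i)], (∀ i, μ i ≪ ν i) → Measure.pi μ ≪ Measure.pi ν
  | 0, _, _, μ, ν, _, _, _ => by rw [pi_of_empty μ, pi_of_empty ν]
  | n + 1, _, _, μ, ν, _, _, h => by
    rw [← (measurePreserving_piFinSuccAbove μ 0).symm.map_eq,
      ← (measurePreserving_piFinSuccAbove ν 0).symm.map_eq]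
    exact ((h 0).prod (pi_fin fun i => h _)).map (MeasurableEquiv.measurable _)

lemma AbsolutelyContinuous.pi {α : ι → Type*} [∀ i, MeasurableSpace (α i)]
    {μ ν : ∀ i, Measure (α i)} [∀ i, SigmaFinite (μ i)] [∀ i, SigmaFinite (ν i)]
    (h : ∀ i, μ i ≪ ν i) : Measure.pi μ ≪ Measure.pi ν := by
  let e := (Fintype.equivFin ι).symm
  rw [← (measurePreserving_piCongrLeft μ e).map_eq,
    ← (measurePreserving_piCongrLeft ν e).map_eq]
  exact (pi_fin fun i => h (e i)).map (MeasurableEquiv.measurable _)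

lemma pi_map_curry {κ α : Type*} [Fintype κ] [MeasurableSpace α] (ν : ι × κ → Measure α)
    [∀ p, SigmaFinite (ν p)] :
    (Measure.pi ν).map Function.curry = Measure.pi fun i => Measure.pi fun j => ν (i, j) := by
  rw [← MeasurableEquiv.coe_curry, MeasurableEquiv.map_apply_eq_iff_map_symm_apply_eq,
    MeasurableEquiv.coe_curry_symm]
  refine pi_eq fun s hs => ?_
  have : Function.uncurry ⁻¹' Set.univ.pi s
      = Set.univ.pi fun i => Set.univ.pi fun j => s (i, j) := by
    ext B
    simp
  rw [map_apply measurable_uncurry (.univ_pi hs), this, pi_pi]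
  simp_rw [pi_pi]
  exact (Fintype.prod_prod_type fun p => ν p (s p)).symm

end MeasureTheory.Measure

section Distortion

variable {ι κ : Type*} [Fintype ι] [Fintype κ]

def IsJLEmbedding (ε : ℝ) (M : Finset (κ → ℝ)) (B : Matrix ι κ ℝ) : Prop :=
  ∀ u ∈ M, ∀ v ∈ M,
    (1 - ε) * ∑ i, (u i - v i) ^ 2 ≤ ∑ j, ((B *ᵥ u) j - (B *ᵥ v) j) ^ 2 ∧
      ∑ j, ((B *ᵥ u) j - (B *ᵥ v) j) ^ 2 ≤ (1 + ε) * ∑ i, (u i - v i) ^ 2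

def distortionEvent (ε : ℝ) (x : κ → ℝ) : Set (ι → κ → ℝ) :=
  {B | ¬ ((1 - ε) * ∑ i, x i ^ 2 ≤ ∑ j, (B *ᵥ x) j ^ 2 ∧
    ∑ j, (B *ᵥ x) j ^ 2 ≤ (1 + ε) * ∑ i, x i ^ 2)}

lemma distortionEvent_neg (ε : ℝ) (x : κ → ℝ) :
    distortionEvent (ι := ι) ε (-x) = distortionEvent ε x := by
  ext B
  simp only [distortionEvent, Set.mem_ofPred_eq, Pi.neg_apply, neg_sq,
    show B *ᵥ -x = -(B *ᵥ x) from mulVec_neg x B]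

def pairDistortionEvent (ε : ℝ) : Sym2 (κ → ℝ) → Set (ι → κ → ℝ) :=
  Sym2.lift ⟨fun u v => distortionEvent ε (u - v), fun u v => by
    simp only [← neg_sub u v, distortionEvent_neg]⟩

lemma measurableSet_isJLEmbedding (ε : ℝ) (M : Finset (κ → ℝ)) :
    MeasurableSet {B : ι → κ → ℝ | IsJLEmbedding ε M B} := by
  have hX : ∀ u v : κ → ℝ,
      Measurable fun B : ι → κ → ℝ => ∑ j, ((B *ᵥ u) j - (B *ᵥ v) j) ^ 2 := by
    intro u v
    simp only [mulVec, dotProduct]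
    fun_prop
  simp only [IsJLEmbedding, Set.ofPred_forall]
  exact .biInter M.countable_toSet fun u _ => .biInter M.countable_toSet fun v _ =>
    (measurableSet_le measurable_const (hX u v)).inter
      (measurableSet_le (hX u v) measurable_const)

lemma not_isJLEmbedding_subset (ε : ℝ) (M : Finset (κ → ℝ)) :
    {B : ι → κ → ℝ | ¬ IsJLEmbedding ε M B}
      ⊆ ⋃ z ∈ M.offDiag.image (Function.uncurry Sym2.mk), pairDistortionEvent ε z := by
  intro B hB
  simp only [IsJLEmbedding, not_forall, Set.mem_ofPred_eq] at hB
  obtain ⟨u, hu, v, hv, hbad⟩ := hB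
  have huv : u ≠ v := by
    rintro rfl
    simp at hbad
  refine Set.mem_biUnion
    (mem_coe.2 (mem_image_of_mem _ ((mem_offDiag (x := (u, v))).2 ⟨hu, hv, huv⟩))) ?_
  simpa [pairDistortionEvent, distortionEvent, mulVec_sub (B : Matrix ι κ ℝ) u v] using hbad

end Distortion

noncomputable def gaussianMatrix (ι κ : Type*) [Fintype ι] [Fintype κ] (w : ℝ≥0) :
    Measure (ι → κ → ℝ) :=
  Measure.pi fun _ : ι => Measure.pi fun _ : κ => gaussianReal 0 w

namespace gaussianMatrix

variable {ι κ : Type*} [Fintype ι] [Fintype κ] {w : ℝ≥0} {x : κ → ℝ} {t : ℝ}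

instance : IsProbabilityMeasure (gaussianMatrix ι κ w) := by
  unfold gaussianMatrix
  infer_instance

lemma absolutelyContinuous {w' : ℝ≥0} (hw : w ≠ 0) (hw' : w' ≠ 0) :
    gaussianMatrix ι κ w ≪ gaussianMatrix ι κ w' :=
  .pi fun _ => .pi fun _ =>
    (gaussianReal_absolutelyContinuous 0 hw).trans (gaussianReal_absolutelyContinuous' 0 hw')

lemma map_eq_of_iIndepFun {Ω : Type*} [MeasurableSpace Ω] {μ : Measure Ω}
    {A : Ω → ι → κ → ℝ} (hindep : iIndepFun (fun (p : ι × κ) ω => A ω p.1 p.2) μ)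
    (hlaw : ∀ p : ι × κ, μ.map (fun ω => A ω p.1 p.2) = gaussianReal 0 w) :
    μ.map A = gaussianMatrix ι κ w := by
  have hmeas : ∀ p : ι × κ, AEMeasurable (fun ω => A ω p.1 p.2) μ := fun p =>
    .of_map_ne_zero (by rw [hlaw]; exact IsProbabilityMeasure.ne_zero _)
  rw [show A = Function.curry ∘ fun ω (p : ι × κ) => A ω p.1 p.2 from rfl,
    ← AEMeasurable.map_map_of_aemeasurable measurable_curry.aemeasurable
      (aemeasurable_pi_lambda _ hmeas), hindep.map_fun_eq_pi_map hmeas]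
  simp_rw [hlaw]
  exact Measure.pi_map_curry _

lemma exp_mul_sum_sq_mulVec (B : ι → κ → ℝ) :
    exp (t * ∑ j, (B *ᵥ x) j ^ 2) = ∏ j, exp (t * (B j ⬝ᵥ x) ^ 2) := by
  rw [mul_sum, exp_sum]
  rfl

variable (w x) in
lemma integral_exp_mul_sq_dotProduct (ht : 2 * t * (w * ∑ i, x i ^ 2) < 1) :
    ∫ b : κ → ℝ, exp (t * (b ⬝ᵥ x) ^ 2) ∂(Measure.pi fun _ => gaussianReal 0 w)
      = (√(1 - 2 * t * (w * ∑ i, x i ^ 2)))⁻¹ := by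
  have hv : ((w * (∑ i, x i ^ 2).toNNReal : ℝ≥0) : ℝ) = w * ∑ i, x i ^ 2 := by
    push_cast
    rw [Real.coe_toNNReal _ (sum_nonneg fun i _ => sq_nonneg _)]
  rw [← hv] at ht ⊢
  rw [← integral_map (φ := (· ⬝ᵥ x)) (f := fun y => exp (t * y ^ 2))
      (by fun_prop) (by fun_prop), pi_gaussianReal_map_dotProduct,
    integral_exp_mul_sq_gaussianReal ht]

lemma mgf_sum_sq_mulVec (ht : 2 * t * (w * ∑ i, x i ^ 2) < 1) :
    mgf (fun B : ι → κ → ℝ => ∑ j, (B *ᵥ x) j ^ 2) (gaussianMatrix ι κ w) t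
      = (√(1 - 2 * t * (w * ∑ i, x i ^ 2)))⁻¹ ^ Fintype.card ι := by
  unfold mgf gaussianMatrix
  simp_rw [exp_mul_sum_sq_mulVec]
  rw [integral_fintype_prod_eq_pow (fun b : κ → ℝ => exp (t * (b ⬝ᵥ x) ^ 2)),
    integral_exp_mul_sq_dotProduct w x ht]

lemma integrable_exp_mul_sum_sq_mulVec (ht : 2 * t * (w * ∑ i, x i ^ 2) < 1) :
    Integrable (fun B : ι → κ → ℝ => exp (t * ∑ j, (B *ᵥ x) j ^ 2))
      (gaussianMatrix ι κ w) :=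
  .of_integral_ne_zero <| by
    rw [← mgf, mgf_sum_sq_mulVec ht]
    exact pow_ne_zero _ (inv_ne_zero (sqrt_ne_zero'.2 (by linarith)))

/-- `ht` is the choice of `t` that minimizes the Chernoff bound at the threshold
`r k w ‖x‖²`. -/
lemma exp_mul_mgf_sum_sq_mulVec_eq {r : ℝ} (hr : 0 < r)
    (ht : 2 * t * (w * ∑ i, x i ^ 2) = 1 - r⁻¹) :
    exp (-t * (r * Fintype.card ι * (w * ∑ i, x i ^ 2)))
        * mgf (fun B : ι → κ → ℝ => ∑ j, (B *ᵥ x) j ^ 2) (gaussianMatrix ι κ w) t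
      = exp (-(Fintype.card ι / 2) * chiSqRate r) := by
  have hlt : 2 * t * (w * ∑ i, x i ^ 2) < 1 := by rw [ht]; linarith [inv_pos.mpr hr]
  have hexp : -t * (r * Fintype.card ι * (w * ∑ i, x i ^ 2))
      = -(Fintype.card ι / 2) * (r - 1) := by
    have : r * r⁻¹ = 1 := mul_inv_cancel₀ hr.ne'
    linear_combination (-(r * Fintype.card ι / 2)) * ht + (Fintype.card ι / 2) * this
  have hpow : √r ^ Fintype.card ι = exp (Fintype.card ι / 2 * log r) := by
    rw [← exp_log (pow_pos (sqrt_pos.2 hr) _), log_pow, log_sqrt hr.le]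
    ring_nf
  rw [mgf_sum_sq_mulVec hlt, ht, sub_sub_cancel, sqrt_inv, inv_inv, hexp, hpow, ← exp_add,
    chiSqRate]
  ring_nf

lemma two_mul_div_mul_eq (hw : w ≠ 0) (hx : x ≠ 0) (a : ℝ) :
    2 * (a / (2 * (w * ∑ i, x i ^ 2))) * (w * ∑ i, x i ^ 2) = a := by
  have := sum_sq_pos_of_ne_zero hx
  have : (w : ℝ) ≠ 0 := NNReal.coe_ne_zero.2 hw
  field_simp

lemma measureReal_le_exp_chiSqRate_of_one_le (hw : w ≠ 0) (hx : x ≠ 0) {r : ℝ}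
    (hr : 1 ≤ r) :
    (gaussianMatrix ι κ w).real
        {B | r * Fintype.card ι * (w * ∑ i, x i ^ 2) ≤ ∑ j, (B *ᵥ x) j ^ 2}
      ≤ exp (-(Fintype.card ι / 2) * chiSqRate r) := by
  set t := (1 - r⁻¹) / (2 * (w * ∑ i, x i ^ 2))
  have ht : 2 * t * (w * ∑ i, x i ^ 2) = 1 - r⁻¹ := two_mul_div_mul_eq hw hx _
  have ht₀ : 0 ≤ t := div_nonneg (sub_nonneg.2 (inv_le_one_of_one_le₀ hr)) (by positivity)
  calc _ ≤ _ := measure_ge_le_exp_mul_mgf _ ht₀ (integrable_exp_mul_sum_sq_mulVec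
        (by rw [ht]; linarith [inv_pos.mpr (by linarith : 0 < r)]))
    _ = _ := exp_mul_mgf_sum_sq_mulVec_eq (by linarith) ht

lemma measureReal_le_exp_chiSqRate_of_le_one (hw : w ≠ 0) (hx : x ≠ 0) {r : ℝ} (hr₀ : 0 < r)
    (hr : r ≤ 1) :
    (gaussianMatrix ι κ w).real
        {B | ∑ j, (B *ᵥ x) j ^ 2 ≤ r * Fintype.card ι * (w * ∑ i, x i ^ 2)}
      ≤ exp (-(Fintype.card ι / 2) * chiSqRate r) := by
  set t := (1 - r⁻¹) / (2 * (w * ∑ i, x i ^ 2))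
  have ht : 2 * t * (w * ∑ i, x i ^ 2) = 1 - r⁻¹ := two_mul_div_mul_eq hw hx _
  have ht₀ : t ≤ 0 :=
    div_nonpos_of_nonpos_of_nonneg (sub_nonpos.2 ((one_le_inv₀ hr₀).2 hr)) (by positivity)
  calc _ ≤ _ := measure_le_le_exp_mul_mgf _ ht₀ (integrable_exp_mul_sum_sq_mulVec
        (by rw [ht]; linarith [inv_pos.mpr hr₀]))
    _ = _ := exp_mul_mgf_sum_sq_mulVec_eq hr₀ ht

lemma measureReal_distortionEvent_le {ε : ℝ} (hε₀ : 0 ≤ ε) (hε₁ : ε < 1 / 2)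
    (hι : 0 < Fintype.card ι) (hx : x ≠ 0) :
    (gaussianMatrix ι κ ((1 - ε ^ 2 / 3) / Fintype.card ι).toNNReal).real
        (distortionEvent ε x)
      ≤ 2 * exp (-(Fintype.card ι * ε ^ 2 / 4)) := by
  set k : ℝ := (Fintype.card ι : ℝ)
  have hk : 0 < k := Nat.cast_pos.2 hι
  have hc : 0 < 1 - ε ^ 2 / 3 := by nlinarith
  set w := ((1 - ε ^ 2 / 3) / k).toNNReal
  have hw : (w : ℝ) = (1 - ε ^ 2 / 3) / k := Real.coe_toNNReal _ (by positivity)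
  have hw₀ : w ≠ 0 := by rw [← NNReal.coe_ne_zero, hw]; positivity
  have hthreshold : ∀ a : ℝ,
      a / (1 - ε ^ 2 / 3) * k * (w * ∑ i, x i ^ 2) = a * ∑ i, x i ^ 2 := by
    intro a
    rw [hw]
    generalize 1 - ε ^ 2 / 3 = c at hc
    field_simp
  have hsub : distortionEvent ε x ⊆
      {B : ι → κ → ℝ |
        ∑ j, (B *ᵥ x) j ^ 2 ≤ (1 - ε) / (1 - ε ^ 2 / 3) * k * (w * ∑ i, x i ^ 2)} ∪
      {B | (1 + ε) / (1 - ε ^ 2 / 3) * k * (w * ∑ i, x i ^ 2) ≤ ∑ j, (B *ᵥ x) j ^ 2} := by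
    intro B hB
    simp only [distortionEvent, Set.mem_ofPred_eq, not_and_or, not_le, hthreshold] at hB ⊢
    exact hB.imp le_of_lt le_of_lt
  have hrate : ∀ r, ε ^ 2 / 2 ≤ chiSqRate r →
      exp (-(k / 2) * chiSqRate r) ≤ exp (-(k * ε ^ 2 / 4)) := by
    intro r hr
    gcongr
    nlinarith
  calc _ ≤ _ := measureReal_mono hsub
    _ ≤ _ := measureReal_union_le _ _
    _ ≤ exp (-(k * ε ^ 2 / 4)) + exp (-(k * ε ^ 2 / 4)) := by
      gcongr
      · exact (measureReal_le_exp_chiSqRate_of_le_one hw₀ hx (div_pos (by linarith) hc)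
          ((div_le_one hc).2 (by nlinarith))).trans
          (hrate _ (sq_div_two_le_chiSqRate_one_sub_div hε₀ hε₁))
      · exact (measureReal_le_exp_chiSqRate_of_one_le hw₀ hx
          ((one_le_div hc).2 (by nlinarith))).trans
          (hrate _ (sq_div_two_le_chiSqRate_one_add_div hε₀ hε₁))
    _ = _ := by ring

lemma measureReal_not_isJLEmbedding_le {ε : ℝ} (hε₀ : 0 ≤ ε) (hε₁ : ε < 1 / 2)
    (hι : 0 < Fintype.card ι) (M : Finset (κ → ℝ)) :
    (gaussianMatrix ι κ ((1 - ε ^ 2 / 3) / Fintype.card ι).toNNReal).real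
        {B | ¬ IsJLEmbedding ε M B}
      ≤ #M.offDiag * exp (-(Fintype.card ι * ε ^ 2 / 4)) := by
  classical
  calc _ ≤ _ := measureReal_mono (not_isJLEmbedding_subset ε M) (measure_ne_top _ _)
    _ ≤ _ := measureReal_biUnion_finset_le _ _
    _ ≤ #(M.offDiag.image (Function.uncurry Sym2.mk))
          • (2 * exp (-(Fintype.card ι * ε ^ 2 / 4))) := by
      refine sum_le_card_nsmul _ _ _ fun z hz => ?_
      obtain ⟨⟨u, v⟩, huv, rfl⟩ := mem_image.1 hz
      exact measureReal_distortionEvent_le hε₀ hε₁ hι (sub_ne_zero.2 (mem_offDiag.1 huv).2.2)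
    _ = _ := by
      rw [nsmul_eq_mul, ← Sym2.two_mul_card_image_offDiag]
      push_cast
      ring

lemma measure_isJLEmbedding_pos {ε : ℝ} (hε₀ : 0 ≤ ε) (hε₁ : ε < 1 / 2)
    (hι : 0 < Fintype.card ι) [DecidableEq κ] (M : Finset (κ → ℝ))
    (hM : 2 * log #M < Fintype.card ι * ε ^ 2 / 4) (hw : w ≠ 0) :
    0 < gaussianMatrix ι κ w {B | IsJLEmbedding ε M B} := by
  set w₀ := ((1 - ε ^ 2 / 3) / Fintype.card ι).toNNReal
  have hw₀ : w₀ ≠ 0 := by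
    have : 0 < 1 - ε ^ 2 / 3 := by nlinarith
    simpa [w₀] using div_pos this (Nat.cast_pos.2 hι)
  have hbad : (gaussianMatrix ι κ w₀).real {B | IsJLEmbedding ε M B}ᶜ < 1 :=
    (measureReal_not_isJLEmbedding_le hε₀ hε₁ hι M).trans_lt
      (offDiag_card_mul_exp_neg_lt_one M (by linarith))
  rw [measureReal_compl (measurableSet_isJLEmbedding ε M), probReal_univ] at hbad
  refine pos_of_ne_zero fun h => ?_
  rw [measureReal_def, absolutelyContinuous hw₀ hw h] at hbad
  norm_num at hbad

end gaussianMatrix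

theorem stmt2_general {k d n : ℕ}
    (M : Finset (Fin d → ℝ)) (hM : M.card = n)
    (ε : ℝ) (hε : ε ∈ Set.Ioo (0 : ℝ) (1 / 2))
    (hk : (k : ℝ) > 8 * Real.log n / ε ^ 2)
    {Ω : Type*} [MeasurableSpace Ω] (μ : Measure Ω)
    (A : Ω → Matrix (Fin k) (Fin d) ℝ)
    (hindep : iIndepFun
      (fun (p : Fin k × Fin d) ω => A ω p.1 p.2) μ)
    (hdist : ∀ p : Fin k × Fin d,
      Measure.map (fun ω => A ω p.1 p.2) μ = gaussianReal 0 (1 / (k : NNReal))) :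
    0 < μ {ω | ∀ u ∈ M, ∀ v ∈ M,
        (1 - ε) * ∑ i, (u i - v i) ^ 2 ≤
            ∑ j, ((A ω).mulVec u j - (A ω).mulVec v j) ^ 2 ∧
          ∑ j, ((A ω).mulVec u j - (A ω).mulVec v j) ^ 2 ≤
            (1 + ε) * ∑ i, (u i - v i) ^ 2} := by
  classical
  obtain ⟨hε₀, hε₁⟩ := hε
  have hkε : 8 * log n < k * ε ^ 2 := by rwa [gt_iff_lt, div_lt_iff₀ (by positivity)] at hk
  have hk₀ : 0 < k := by
    have : (0 : ℝ) < k * ε ^ 2 := by linarith [log_natCast_nonneg n]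
    exact_mod_cast pos_of_mul_pos_left this (sq_nonneg ε)
  have hlaw := gaussianMatrix.map_eq_of_iIndepFun hindep hdist
  have hmeas : AEMeasurable (β := Fin k → Fin d → ℝ) (fun ω => A ω) μ :=
    .of_map_ne_zero (by rw [hlaw]; exact IsProbabilityMeasure.ne_zero _)
  show 0 < μ (Set.preimage (β := Fin k → Fin d → ℝ) (fun ω => A ω)
    {B | IsJLEmbedding ε M B})
  rw [← Measure.map_apply_of_aemeasurable hmeas (measurableSet_isJLEmbedding ε M), hlaw]
  exact gaussianMatrix.measure_isJLEmbedding_pos hε₀.le hε₁ (by simpa using hk₀) M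
    (by rw [hM, Fintype.card_fin]; linarith) (by simp [hk₀.ne'])

/-- Johnson–Lindenstrauss lemma for finite sets: if `M ⊂ ℝ^d` has `n ≥ 2` points,
`ε ∈ (0, 1/2)` and `k > 8 log n / ε²`, then a `k × d` matrix with i.i.d. `N(0, 1/k)` entries
satisfies, with positive probability, `(1-ε)‖u-v‖² ≤ ‖Au-Av‖² ≤ (1+ε)‖u-v‖²` for all pairs
`u, v ∈ M` simultaneously. -/
theorem stmt2 {k d n : ℕ} (hn : 2 ≤ n)
    (M : Finset (Fin d → ℝ)) (hM : M.card = n)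
    (ε : ℝ) (hε : ε ∈ Set.Ioo (0 : ℝ) (1 / 2))
    (hk : (k : ℝ) > 8 * Real.log n / ε ^ 2)
    {Ω : Type*} [MeasurableSpace Ω] (μ : Measure Ω) [IsProbabilityMeasure μ]
    (A : Ω → Matrix (Fin k) (Fin d) ℝ)
    (hindep : iIndepFun
      (fun (p : Fin k × Fin d) ω => A ω p.1 p.2) μ)
    (hdist : ∀ p : Fin k × Fin d,
      Measure.map (fun ω => A ω p.1 p.2) μ = gaussianReal 0 (1 / (k : NNReal))) :
    0 < μ {ω | ∀ u ∈ M, ∀ v ∈ M,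
        (1 - ε) * ∑ i, (u i - v i) ^ 2 ≤
            ∑ j, ((A ω).mulVec u j - (A ω).mulVec v j) ^ 2 ∧
          ∑ j, ((A ω).mulVec u j - (A ω).mulVec v j) ^ 2 ≤
            (1 + ε) * ∑ i, (u i - v i) ^ 2} :=
  stmt2_general M hM ε hε hk μ A hindep hdist
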